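/- arXiv:1702.00361 — 2 statements merged into one kernel-verified Lean document; each statement's English description precedes it below -/
import Mathlib

section
/- For every symmetric adversary A over a finite set Π of n processes, setcon(A) = |{k ∈ {1,…,n} : ∃ S ∈ A with |S| = k}|, i.e., the set consensus power of a symmetric adversary equals the number of distinct cardinalities of its live sets. -/
variable {α : Type*} [DecidableEq α]

/-- The restriction `A|_P` of an adversary `A` to a set of processes `P`:
the live sets of `A` that are contained in `P`. -/
def restrict (A : Finset (Finset α)) (P : Finset α) : Finset (Finset α) :=
  A.filter fun S => S ⊆ P

/-- The set consensus power `setcon A` of an adversary `A`: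
`setcon ∅ = 0` and, for `A ≠ ∅`,
`setcon A = 1 + max_{S ∈ A} min_{a ∈ S} setcon (A|_{S \ {a}})`. -/
def setcon (A : Finset (Finset α)) : ℕ :=
  if A = ∅ then 0
  else 1 + A.attach.sup fun S =>
    (S.1.attach.image fun a => setcon (restrict A (S.1.erase a.1))).min.untopD 0
termination_by A.card
decreasing_by
  apply Finset.card_lt_card
  rw [Finset.ssubset_def]
  refine ⟨Finset.filter_subset _ _, fun hsub => ?_⟩
  have hmem := hsub S.2
  rw [restrict, Finset.mem_filter] at hmem
  exact Finset.notMem_erase a.1 S.1 (hmem.2 a.2)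

/-- The restriction `A|_{P,Q}`: live sets of `A` contained in `P` that intersect `Q`. -/
def restrictTo (A : Finset (Finset α)) (P Q : Finset α) : Finset (Finset α) :=
  (restrict A P).filter fun S => (S ∩ Q).Nonempty

/-- An adversary is fair if for all `P` and all `Q ⊆ P`,
`setcon (A|_{P,Q}) = min |Q| (setcon (A|_P))`. -/
def Fair (A : Finset (Finset α)) : Prop :=
  ∀ P Q : Finset α, Q ⊆ P →
    setcon (restrictTo A P Q) = min Q.card (setcon (restrict A P))

/-- `csize A`: the minimal cardinality of a hitting set of `A`, i.e. of a set
intersecting every live set of `A`. -/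
noncomputable def csize (A : Finset (Finset α)) : ℕ :=
  sInf {k | ∃ H : Finset α, H.card = k ∧ ∀ S ∈ A, (H ∩ S).Nonempty}

/-!
Restricting a symmetric adversary to a set `P` keeps exactly the live-set sizes `k ≤ |P|`, so
`setcon (A|_P)` can only depend on the set `K` of sizes occurring in `A|_P`. Induction on `P`
shows that it is `|K|`: removing a process from a live set of size `k` leaves the sizes below
`k`, and the recursion maximises `|{k' ∈ K : k' < k}| = |K| - 1` at the largest size `k ∈ K`.
-/

open scoped Finset

lemma Finset.sup_card_filter_lt_add_one {β : Type*} [LinearOrder β] {s : Finset β}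
    (hs : s.Nonempty) : s.sup (fun k => #(s.filter (· < k))) + 1 = #s := by
  have hmono : Monotone fun k => #(s.filter (· < k)) := fun j k hjk =>
    Finset.card_le_card (Finset.monotone_filter_right s fun _ _ hi => hi.trans_le hjk)
  have hmax : s.sup (fun k => #(s.filter (· < k))) = #(s.filter (· < s.max' hs)) :=
    le_antisymm (Finset.sup_le fun k hk => hmono (Finset.le_max' s k hk))
      (Finset.le_sup (f := fun k => #(s.filter (· < k))) (Finset.max'_mem s hs))
  have herase : s.filter (· < s.max' hs) = s.erase (s.max' hs) := by
    ext k
    simp only [Finset.mem_filter, Finset.mem_erase]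
    exact ⟨fun ⟨hk, hlt⟩ => ⟨hlt.ne, hk⟩,
      fun ⟨hne, hk⟩ => ⟨hk, lt_of_le_of_ne (Finset.le_max' s k hk) hne⟩⟩
  rw [hmax, herase, Finset.card_erase_add_one (Finset.max'_mem s hs)]

@[simp]
lemma mem_restrict {A : Finset (Finset α)} {P S : Finset α} :
    S ∈ restrict A P ↔ S ∈ A ∧ S ⊆ P :=
  Finset.mem_filter

lemma restrict_restrict (A : Finset (Finset α)) {P Q : Finset α} (h : Q ⊆ P) :
    restrict (restrict A P) Q = restrict A Q := by
  ext S
  simp only [mem_restrict, and_assoc]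
  exact and_congr_right fun _ => and_iff_right_of_imp fun hS => hS.trans h

lemma restrict_univ [Fintype α] (A : Finset (Finset α)) : restrict A Finset.univ = A :=
  Finset.filter_true_of_mem fun S _ => Finset.subset_univ S

lemma setcon_eq_one_add_sup {A : Finset (Finset α)} (hA : A.Nonempty)
    (hne : ∀ S ∈ A, S.Nonempty) (f : Finset α → ℕ)
    (hf : ∀ S ∈ A, ∀ a ∈ S, setcon (restrict A (S.erase a)) = f S) :
    setcon A = 1 + A.sup f := by
  rw [setcon, if_neg hA.ne_empty, ← Finset.sup_attach A f]
  congr 1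
  refine Finset.sup_congr rfl fun S _ => ?_
  have hconst : (S.1.attach.image fun a => setcon (restrict A (S.1.erase a.1))) = {f S.1} := by
    rw [← Finset.image_const ((hne S.1 S.2).attach)]
    exact Finset.image_congr fun a _ => hf S.1 S.2 a.1 a.2
  rw [hconst, Finset.min_singleton, WithTop.untopD_coe]

def IsSymmetric (A : Finset (Finset α)) : Prop :=
  ∀ S ∈ A, ∀ S' : Finset α, #S' = #S → S' ∈ A

lemma IsSymmetric.image_card_restrict {A : Finset (Finset α)} (hA : IsSymmetric A)
    (P : Finset α) :
    (restrict A P).image Finset.card = (A.image Finset.card).filter (· ≤ #P) := by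
  ext k
  simp only [Finset.mem_image, Finset.mem_filter, mem_restrict]
  constructor
  · rintro ⟨S, ⟨hSA, hSP⟩, rfl⟩
    exact ⟨⟨S, hSA, rfl⟩, Finset.card_le_card hSP⟩
  · rintro ⟨⟨S, hSA, rfl⟩, hle⟩
    obtain ⟨S', hS'P, hS'⟩ := Finset.exists_subset_card_eq hle
    exact ⟨S', ⟨hA S hSA S' hS', hS'P⟩, hS'⟩

lemma IsSymmetric.setcon_restrict {A : Finset (Finset α)} (hA : IsSymmetric A)
    (hne : ∀ S ∈ A, S.Nonempty) (P : Finset α) :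
    setcon (restrict A P) = #((restrict A P).image Finset.card) := by
  induction P using Finset.strongInduction with
  | H P ih =>
  set B := restrict A P
  rcases B.eq_empty_or_nonempty with hB | hB
  · rw [hB, setcon, if_pos rfl, Finset.image_empty, Finset.card_empty]
  have hsizes : ∀ S ∈ B,
      (A.image Finset.card).filter (· < #S) = (B.image Finset.card).filter (· < #S) := by
    intro S hS
    rw [hA.image_card_restrict, Finset.filter_filter]
    exact Finset.filter_congr fun k _ =>
      (and_iff_right_of_imp fun hk => hk.le.trans (Finset.card_le_card (mem_restrict.1 hS).2)).symm
  have herase : ∀ S ∈ B, ∀ a ∈ S,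
      setcon (restrict B (S.erase a)) = #((B.image Finset.card).filter (· < #S)) := by
    intro S hS a ha
    have hSP : S.erase a ⊂ P := (Finset.erase_ssubset ha).trans_le (mem_restrict.1 hS).2
    rw [restrict_restrict A hSP.subset, ih _ hSP, hA.image_card_restrict, ← hsizes S hS,
      Finset.card_erase_of_mem ha]
    congr 1
    exact Finset.filter_congr fun k _ => Nat.le_sub_one_iff_lt (Finset.card_pos.2 ⟨a, ha⟩)
  rw [setcon_eq_one_add_sup hB (fun S hS => hne S (mem_restrict.1 hS).1) _ herase,
    ← Finset.sup_card_filter_lt_add_one (hB.image Finset.card), Finset.sup_image, add_comm]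
  rfl

omit [DecidableEq α] in
lemma image_card_eq_filter_Icc [Fintype α] {A : Finset (Finset α)}
    (hne : ∀ S ∈ A, S.Nonempty) :
    A.image Finset.card = (Finset.Icc 1 (Fintype.card α)).filter fun k => ∃ S ∈ A, #S = k := by
  ext k
  simp only [Finset.mem_image, Finset.mem_filter, Finset.mem_Icc]
  constructor
  · rintro ⟨S, hS, rfl⟩
    exact ⟨⟨Finset.card_pos.2 (hne S hS), Finset.card_le_univ S⟩, S, hS, rfl⟩
  · exact fun ⟨_, hk⟩ => hk

/-- For a symmetric adversary, `setcon A` equals the number of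
distinct cardinalities `k ∈ {1, …, n}` of its live sets. -/
theorem setcon_symmetric_eq_card_sizes [Fintype α] (A : Finset (Finset α))
    (hne : ∀ S ∈ A, S.Nonempty)
    (hsym : ∀ S ∈ A, ∀ S' : Finset α, S'.card = S.card → S' ∈ A) :
    setcon A =
      ((Finset.Icc 1 (Fintype.card α)).filter fun k => ∃ S ∈ A, S.card = k).card := by
  have key := IsSymmetric.setcon_restrict hsym hne Finset.univ
  rw [restrict_univ] at key
  rw [key, image_card_eq_filter_Icc hne]
end

section
/- Let A be an adversary over a finite set Π, let W, Q ⊆ Π and let s ≥ 1 be an integer. If setcon(A|_{W,Q}) ≥ s, then there exists a live set S ∈ A with S ⊆ W such that setcon(A|_{S,Q}) ≥ s. -/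
variable {α : Type*} [DecidableEq α]

def minSetconErase (A : Finset (Finset α)) (S : Finset α) : ℕ :=
  (S.image fun a => setcon (restrict A (S.erase a))).min.untopD 0

section

variable {A : Finset (Finset α)} {S : Finset α}

@[simp]
lemma setcon_empty : setcon (∅ : Finset (Finset α)) = 0 := by
  rw [setcon, if_pos rfl]

lemma setcon_of_ne_empty (hA : A ≠ ∅) : setcon A = 1 + A.sup (minSetconErase A) := by
  rw [setcon, if_neg hA, ← Finset.sup_attach A (minSetconErase A)]
  congr 1
  refine Finset.sup_congr rfl fun S _ => ?_
  unfold minSetconErase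
  congr 2
  ext n
  simp

lemma exists_mem_setcon_eq (hA : A ≠ ∅) : ∃ S ∈ A, setcon A = 1 + minSetconErase A S := by
  obtain ⟨S, hS, hsup⟩ :=
    Finset.exists_mem_eq_sup A (Finset.nonempty_iff_ne_empty.2 hA) (minSetconErase A)
  exact ⟨S, hS, by rw [setcon_of_ne_empty hA, hsup]⟩

lemma add_minSetconErase_le_setcon (hS : S ∈ A) : 1 + minSetconErase A S ≤ setcon A := by
  rw [setcon_of_ne_empty (Finset.ne_empty_of_mem hS)]
  exact Nat.add_le_add_left (Finset.le_sup hS) 1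

end

lemma restrict_restrict_of_subset (A : Finset (Finset α)) {P T : Finset α} (hTP : T ⊆ P) :
    restrict (restrict A P) T = restrict A T := by
  ext U
  simp only [restrict, Finset.mem_filter]
  exact ⟨fun h => ⟨h.1.1, h.2⟩, fun h => ⟨⟨h.1, h.2.trans hTP⟩, h.2⟩⟩

lemma minSetconErase_congr {A B : Finset (Finset α)} {S : Finset α}
    (h : restrict A S = restrict B S) : minSetconErase A S = minSetconErase B S := by
  unfold minSetconErase
  congr 2
  refine Finset.image_congr fun a _ => ?_
  rw [← restrict_restrict_of_subset A (S.erase_subset a), h,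
    restrict_restrict_of_subset B (S.erase_subset a)]

lemma restrict_restrictTo (A : Finset (Finset α)) {W P : Finset α} (Q : Finset α) (hPW : P ⊆ W) :
    restrict (restrictTo A W Q) P = restrictTo A P Q := by
  ext T
  simp only [restrict, restrictTo, Finset.mem_filter]
  exact ⟨fun h => ⟨⟨h.1.1.1, h.2⟩, h.1.2⟩, fun h => ⟨⟨⟨h.1.1, h.1.2.trans hPW⟩, h.2⟩, h.1.2⟩⟩

/-- Restricting to a set `S` that realises the maximum in `setcon (A|_{W,Q})` leaves the
inner minimum for `S` unchanged, since it only sees `A|_{W,Q}|_S = A|_{S,Q}`. -/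
theorem exists_liveSet_of_setcon_ge_general (A : Finset (Finset α))
    (W Q : Finset α) (s : ℕ) (hs : 1 ≤ s)
    (h : s ≤ setcon (restrictTo A W Q)) :
    ∃ S ∈ A, S ⊆ W ∧ s ≤ setcon (restrictTo A S Q) := by
  have hB : restrictTo A W Q ≠ ∅ := by
    rintro hB
    rw [hB, setcon_empty] at h
    omega
  obtain ⟨S, hSB, hS⟩ := exists_mem_setcon_eq hB
  obtain ⟨⟨hSA, hSW⟩, hSQ⟩ : (S ∈ A ∧ S ⊆ W) ∧ (S ∩ Q).Nonempty := by
    simpa only [restrictTo, restrict, Finset.mem_filter] using hSB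
  have hS_mem : S ∈ restrictTo A S Q := by
    simp only [restrictTo, restrict, Finset.mem_filter]
    exact ⟨⟨hSA, subset_rfl⟩, hSQ⟩
  refine ⟨S, hSA, hSW, ?_⟩
  calc s ≤ setcon (restrictTo A W Q) := h
    _ = 1 + minSetconErase (restrictTo A W Q) S := hS
    _ = 1 + minSetconErase (restrictTo A S Q) S := by
      rw [minSetconErase_congr ((restrict_restrictTo A Q hSW).trans
        (restrict_restrictTo A Q subset_rfl).symm)]
    _ ≤ setcon (restrictTo A S Q) := add_minSetconErase_le_setcon hS_mem

/-- if `setcon (A|_{W,Q}) ≥ s ≥ 1`, then there is a live set `S ⊆ W`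
with `setcon (A|_{S,Q}) ≥ s`. -/
theorem exists_liveSet_of_setcon_ge [Fintype α] (A : Finset (Finset α))
    (hne : ∀ S ∈ A, S.Nonempty) (W Q : Finset α) (s : ℕ) (hs : 1 ≤ s)
    (h : s ≤ setcon (restrictTo A W Q)) :
    ∃ S ∈ A, S ⊆ W ∧ s ≤ setcon (restrictTo A S Q) :=
  exists_liveSet_of_setcon_ge_general A W Q s hs h
end
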